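/- Suppose Φ admits a strong minimum at x*, i.e. there exists μ > 0 such that Φ(y) ≥ Φ(x*) + (μ/2)‖y − x*‖² for every y ∈ H (so argmin Φ = {x*}). Then for any α > 0, x(t) converges strongly to x* as t → +∞, and moreover: (i) Φ(x(t)) − inf Φ = O(t^{−2α/3}); (ii) ‖x(t) − x*‖² = O(t^{−2α/3}); (iii) ‖ẋ(t)‖ = O(t^{−α/3}), as t → +∞. -/

import Mathlib

/-!
With `p = 2α/3`, the energy `E = avdEnergy Φ x x* p` has derivative
`p t^(p-1) (Φ(x) - Φ(x*) - ⟪∇Φ(x), x - x*⟫) + c (p - 2) t^(p-3) ‖x - x*‖²`, `c = p(p+2)/4`,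
along `(AVD)_α`. Convexity makes the first term nonpositive, and the strong minimum bounds
`‖x - x*‖²` by `(2/μ)(Φ(x) - Φ(x*))`. Once `3μt² ≥ 8p²` the energy dominates
`t^p (Φ(x) - Φ(x*) + ‖ẋ‖²) / 4`, so `E' ≤ (K/t³) E` and `E(t) exp(K/(2t²))` is nonincreasing.
Hence `t^p (Φ(x) - Φ(x*) + ‖ẋ‖²)` is bounded, which gives the three rates; the rate for
`‖x - x*‖²` gives strong convergence.
-/

open Real Filter Topology Set
open scoped RealInnerProductSpace

theorem le_sqrt_div_rpow_of_rpow_mul_sq_le {a t q M : ℝ} (ht : 0 < t) (ha : 0 ≤ a)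
    (h : t ^ (2 * q) * a ^ 2 ≤ M) : a ≤ √M / t ^ q := by
  have htq : 0 < t ^ q := Real.rpow_pos_of_pos ht q
  rw [le_div_iff₀ htq, ← Real.sqrt_sq (by positivity : 0 ≤ a * t ^ q)]
  refine Real.sqrt_le_sqrt (le_of_eq_of_le ?_ h)
  rw [mul_pow, ← Real.rpow_natCast (t ^ q), ← Real.rpow_mul ht.le]
  push_cast
  ring_nf

theorem le_mul_exp_of_hasDerivAt_le_div_cube {E E' : ℝ → ℝ} {K T : ℝ} (hT : 0 < T)
    (hK : 0 ≤ K) (hE : ∀ t, T ≤ t → HasDerivAt E (E' t) t)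
    (hE' : ∀ t, T ≤ t → E' t ≤ K / t ^ 3 * E t) (hE0 : ∀ t, T ≤ t → 0 ≤ E t) {t : ℝ}
    (ht : T ≤ t) : E t ≤ E T * exp (K / (2 * T ^ 2)) := by
  set F : ℝ → ℝ := fun s => E s * exp (K / (2 * s ^ 2))
  have hF : ∀ s, T ≤ s → HasDerivAt F ((E' s - K / s ^ 3 * E s) * exp (K / (2 * s ^ 2))) s := by
    intro s hs
    have hs0 : s ≠ 0 := (hT.trans_le hs).ne'
    have hexp : HasDerivAt (fun s : ℝ => K / (2 * s ^ 2)) (-(K / s ^ 3)) s := by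
      refine ((hasDerivAt_const s K).div ((hasDerivAt_pow 2 s).const_mul 2)
        (by positivity)).congr_deriv ?_
      field_simp
      ring
    exact ((hE s hs).mul hexp.exp).congr_deriv (by ring)
  have hanti : AntitoneOn F (Ici T) := by
    refine antitoneOn_of_hasDerivWithinAt_nonpos (convex_Ici T)
      (fun s hs => (hF s hs).continuousAt.continuousWithinAt)
      (fun s hs => (hF s (interior_subset hs)).hasDerivWithinAt) fun s hs => ?_
    exact mul_nonpos_of_nonpos_of_nonneg (by linarith [hE' s (interior_subset hs)]) (exp_pos _).le
  calc E t ≤ F t := le_mul_of_one_le_right (hE0 t ht) (one_le_exp (by positivity))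
    _ ≤ F T := hanti self_mem_Ici ht ht

theorem exists_nonneg_bound_of_continuousOn_Ici {f : ℝ → ℝ} {t₀ T B : ℝ}
    (hf : ContinuousOn f (Ici t₀)) (hB : ∀ t, T ≤ t → f t ≤ B) :
    ∃ M, 0 ≤ M ∧ ∀ t, t₀ ≤ t → f t ≤ M := by
  obtain ⟨C, hC⟩ :=
    isCompact_Icc.bddAbove_image (hf.mono (Icc_subset_Ici_self : Icc t₀ T ⊆ Ici t₀))
  refine ⟨max (max B C) 0, le_max_right _ _, fun t ht => ?_⟩
  rcases le_total T t with hTt | htT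
  · exact (hB t hTt).trans ((le_max_left _ _).trans (le_max_left _ _))
  · exact (hC (mem_image_of_mem f ⟨ht, htT⟩)).trans ((le_max_right _ _).trans (le_max_left _ _))

theorem tendsto_of_norm_sub_sq_le_div_rpow {E : Type*} [SeminormedAddCommGroup E] {x : ℝ → E}
    {z : E} {t₀ M p : ℝ} (hp : 0 < p) (hx : ∀ t, t₀ ≤ t → ‖x t - z‖ ^ 2 ≤ M / t ^ p) :
    Tendsto x atTop (𝓝 z) := by
  have hsq : Tendsto (fun t => ‖x t - z‖ ^ 2) atTop (𝓝 0) :=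
    squeeze_zero' (Eventually.of_forall fun t => by positivity)
      ((eventually_ge_atTop t₀).mono hx) (tendsto_const_nhds.div_atTop (tendsto_rpow_atTop hp))
  rw [tendsto_iff_norm_sub_tendsto_zero]
  simpa using hsq.sqrt

section HilbertSpace

variable {H : Type*} [NormedAddCommGroup H] [InnerProductSpace ℝ H]

theorem HasGradientAt.hasDerivAt_comp [CompleteSpace H] {f : H → ℝ} {f' : H} {γ : ℝ → H}
    {γ' : H} {t : ℝ}
    (hf : HasGradientAt f f' (γ t)) (hγ : HasDerivAt γ γ' t) :
    HasDerivAt (fun s => f (γ s)) ⟪f', γ'⟫ t := by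
  show HasDerivAt (f ∘ γ) _ t
  simpa using hf.hasFDerivAt.comp_hasDerivAt t hγ

theorem ConvexOn.add_inner_gradient_le [CompleteSpace H] {f : H → ℝ} (hf : ConvexOn ℝ univ f)
    {y : H} (hd : DifferentiableAt ℝ f y) (z : H) : f y + ⟪gradient f y, z - y⟫ ≤ f z := by
  have hline : HasDerivAt (fun s : ℝ => y + s • (z - y)) (z - y) 0 := by
    simpa using ((hasDerivAt_id (0 : ℝ)).smul_const (z - y)).const_add y
  have hgrad : HasGradientAt f (gradient f y) (y + (0 : ℝ) • (z - y)) := by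
    simpa using hd.hasGradientAt
  have hconv : ConvexOn ℝ univ fun s : ℝ => f (y + s • (z - y)) := by
    have hfun : (fun s : ℝ => f (y + s • (z - y))) = f ∘ AffineMap.lineMap y z := by
      funext s
      simp [AffineMap.lineMap_apply, add_comm]
    simpa [hfun] using hf.comp_affineMap (AffineMap.lineMap y z)
  have h := hconv.le_slope_of_hasDerivAt (mem_univ 0) (mem_univ 1) one_pos
    (hgrad.hasDerivAt_comp hline)
  simp [slope_def_field] at h ⊢
  linarith

section Energy

variable (Φ : H → ℝ) (x : ℝ → H) (z : H) (p : ℝ)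

/-- The weights `p = 2α/3` and `p(p+2)/4` are exactly the ones for which the terms in `‖ẋ‖²`
and `⟪x - z, ẋ⟫` cancel in the derivative along `(AVD)_α`, see `hasDerivAt_avdEnergy`. -/
noncomputable def avdEnergy (t : ℝ) : ℝ :=
  t ^ p * (Φ (x t) - Φ z) + t ^ p * ‖deriv x t‖ ^ 2 / 2
    + p * t ^ (p - 1) * ⟪x t - z, deriv x t⟫ + p * (p + 2) / 4 * t ^ (p - 2) * ‖x t - z‖ ^ 2

/-- The weights `p = 2α/3` and `p(p+2)/4` are exactly the ones for which the terms in `‖ẋ‖²`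
and `⟪x - z, ẋ⟫` cancel in the derivative along `(AVD)_α`, see `hasDerivAt_avdEnergy`. -/
noncomputable def avdEnergyDeriv [CompleteSpace H] (t : ℝ) : ℝ :=
  p * t ^ (p - 1) * (Φ (x t) - Φ z - ⟪gradient Φ (x t), x t - z⟫)
    + p * (p + 2) * (p - 2) / 4 * t ^ (p - 3) * ‖x t - z‖ ^ 2

variable {Φ x p}

theorem hasDerivAt_avdEnergy [CompleteSpace H] {α t : ℝ} (hp : 2 * α = 3 * p) (ht : 0 < t)
    (hΦ : DifferentiableAt ℝ Φ (x t)) (hx : DifferentiableAt ℝ x t)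
    (hx' : DifferentiableAt ℝ (deriv x) t)
    (hode : deriv (deriv x) t + (α / t) • deriv x t + gradient Φ (x t) = 0) :
    HasDerivAt (avdEnergy Φ x z p) (avdEnergyDeriv Φ x z p t) t := by
  have hacc : deriv (deriv x) t = -((α / t) • deriv x t) - gradient Φ (x t) := by
    rw [← sub_eq_zero, ← hode]; abel
  have hX := hx.hasDerivAt
  have hV := hX.sub_const z
  have hU := hx'.hasDerivAt
  have hP (q : ℝ) : HasDerivAt (fun s => s ^ q) (q * t ^ (q - 1)) t :=
    Real.hasDerivAt_rpow_const (Or.inl ht.ne')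
  have h := ((((hP p).mul ((hΦ.hasGradientAt.hasDerivAt_comp hX).sub_const (Φ z))).add
    (((hP p).mul hU.norm_sq).div_const 2)).add
    (((hP (p - 1)).const_mul p).mul (hV.inner ℝ hU))).add
    (((hP (p - 2)).const_mul (p * (p + 2) / 4)).mul hV.norm_sq)
  refine h.congr_deriv ?_
  obtain rfl : α = 3 * p / 2 := by linarith
  rw [hacc, show p - 1 - 1 = p - 2 by ring, show p - 2 - 1 = p - 3 by ring]
  simp only [avdEnergyDeriv, inner_sub_right, inner_neg_right, inner_smul_right,
    real_inner_self_eq_norm_sq, real_inner_comm (gradient Φ (x t)), Real.rpow_sub ht,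
    Real.rpow_one, Real.rpow_ofNat]
  field_simp
  ring

variable {z}

theorem avdEnergy_ge {μ t : ℝ} (hz : ∀ y, Φ z + μ / 2 * ‖y - z‖ ^ 2 ≤ Φ y) (hp : 0 ≤ p)
    (ht : 0 < t) (hμt : 8 * p ^ 2 ≤ 3 * μ * t ^ 2) :
    t ^ p * (Φ (x t) - Φ z + ‖deriv x t‖ ^ 2) / 4 ≤ avdEnergy Φ x z p t := by
  set a := ‖x t - z‖
  set b := ‖deriv x t‖
  have hA : μ / 2 * a ^ 2 ≤ Φ (x t) - Φ z := by linarith [hz (x t)]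
  have hs : -(a * b) ≤ ⟪x t - z, deriv x t⟫ := neg_le_of_abs_le (abs_real_inner_le_norm _ _)
  have key : 0 ≤ 3 / 4 * t ^ 2 * (Φ (x t) - Φ z) + t ^ 2 * b ^ 2 / 4
      + p * t * ⟪x t - z, deriv x t⟫ + p * (p + 2) / 4 * a ^ 2 := by
    nlinarith [sq_nonneg (p * a - t * b / 2),
      mul_le_mul_of_nonneg_left hs (by positivity : 0 ≤ p * t),
      mul_le_mul_of_nonneg_left hA (by positivity : (0 : ℝ) ≤ 3 / 4 * t ^ 2),
      mul_le_mul_of_nonneg_right hμt (sq_nonneg a),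
      mul_nonneg (by positivity : 0 ≤ p * (p + 2)) (sq_nonneg a)]
  have hr : 0 < t ^ (p - 2) := Real.rpow_pos_of_pos ht _
  have e1 : t ^ (p - 1) = t ^ (p - 2) * t := by
    rw [Real.rpow_sub ht, Real.rpow_sub ht, Real.rpow_one, Real.rpow_ofNat]; field_simp
  have e0 : t ^ p = t ^ (p - 2) * t ^ 2 := by
    rw [Real.rpow_sub ht, Real.rpow_ofNat]; field_simp
  rw [avdEnergy, e0, e1]
  nlinarith [mul_nonneg hr.le key]

theorem avdEnergyDeriv_le [CompleteSpace H] {μ t : ℝ} (hΦ : ConvexOn ℝ univ Φ)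
    (hΦx : DifferentiableAt ℝ Φ (x t)) (hμ : 0 < μ) (hz : ∀ y, Φ z + μ / 2 * ‖y - z‖ ^ 2 ≤ Φ y) (hp : 0 ≤ p) (ht : 0 < t)
    (hμt : 8 * p ^ 2 ≤ 3 * μ * t ^ 2) :
    avdEnergyDeriv Φ x z p t ≤ 2 * p ^ 2 * (p + 2) / μ / t ^ 3 * avdEnergy Φ x z p t := by
  have hgrad := hΦ.add_inner_gradient_le hΦx z
  rw [← neg_sub (x t) z, inner_neg_right] at hgrad
  have hnorm : ‖x t - z‖ ^ 2 ≤ 2 / μ * (Φ (x t) - Φ z) := by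
    rw [div_mul_eq_mul_div, le_div_iff₀ hμ]; linarith [hz (x t)]
  have hlow := avdEnergy_ge (x := x) hz hp ht hμt
  have e3 : t ^ (p - 3) = t ^ p / t ^ 3 := by rw [Real.rpow_sub ht, Real.rpow_ofNat]
  have hX : 0 ≤ t ^ p / t ^ 3 * ‖x t - z‖ ^ 2 := by positivity
  calc avdEnergyDeriv Φ x z p t
      ≤ p * (p + 2) / 4 * p * (t ^ p / t ^ 3 * ‖x t - z‖ ^ 2) := by
        rw [avdEnergyDeriv, e3]
        have h1 : p * t ^ (p - 1) * (Φ (x t) - Φ z - ⟪gradient Φ (x t), x t - z⟫) ≤ 0 :=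
          mul_nonpos_of_nonneg_of_nonpos (by positivity) (by linarith)
        nlinarith [mul_nonneg (by positivity : 0 ≤ p * (p + 2)) hX]
    _ ≤ p * (p + 2) / 4 * p * (t ^ p / t ^ 3 * (2 / μ * (Φ (x t) - Φ z))) := by gcongr
    _ = 2 * p ^ 2 * (p + 2) / μ / t ^ 3 * (t ^ p * (Φ (x t) - Φ z) / 4) := by
        field_simp
    _ ≤ 2 * p ^ 2 * (p + 2) / μ / t ^ 3 * avdEnergy Φ x z p t := by
        gcongr
        refine le_trans ?_ hlow
        gcongr
        exact le_add_of_nonneg_right (sq_nonneg _)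

end Energy

theorem exists_rpow_mul_le_of_avd [CompleteSpace H] {Φ : H → ℝ} {x : ℝ → H} {z : H}
    {μ α t₀ : ℝ} (hΦ : ConvexOn ℝ univ Φ) (hΦd : Differentiable ℝ Φ) (hμ : 0 < μ)
    (hz : ∀ y, Φ z + μ / 2 * ‖y - z‖ ^ 2 ≤ Φ y) (hα : 0 < α) (ht₀ : 0 < t₀)
    (hx : Differentiable ℝ x) (hx' : Differentiable ℝ (deriv x))
    (hode : ∀ t, t₀ ≤ t → deriv (deriv x) t + (α / t) • deriv x t + gradient Φ (x t) = 0) :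
    ∃ T B, ∀ t, T ≤ t → t ^ (2 * α / 3) * (Φ (x t) - Φ z + ‖deriv x t‖ ^ 2) ≤ B := by
  set p := 2 * α / 3
  have hp : 0 < p := by positivity
  obtain ⟨T, hT⟩ : ∃ T, ∀ t, T ≤ t → t₀ ≤ t ∧ 8 * p ^ 2 ≤ 3 * μ * t ^ 2 :=
    eventually_atTop.mp <| (eventually_ge_atTop t₀).and <|
      ((tendsto_pow_atTop two_ne_zero).const_mul_atTop (by positivity)).eventually_ge_atTop _
  have hT : ∀ t, T ≤ t → 0 < t ∧ t₀ ≤ t ∧ 8 * p ^ 2 ≤ 3 * μ * t ^ 2 :=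
    fun t ht => ⟨ht₀.trans_le (hT t ht).1, hT t ht⟩
  have hlow t (ht : T ≤ t) := avdEnergy_ge (x := x) hz hp.le (hT t ht).1 (hT t ht).2.2
  have hE0 t (ht : T ≤ t) : 0 ≤ avdEnergy Φ x z p t := by
    have hA : 0 ≤ Φ (x t) - Φ z := by nlinarith [hz (x t), sq_nonneg ‖x t - z‖]
    have htp := Real.rpow_nonneg (hT t ht).1.le p
    exact le_trans (by positivity) (hlow t ht)
  refine ⟨T, 4 * (avdEnergy Φ x z p T * exp (2 * p ^ 2 * (p + 2) / μ / (2 * T ^ 2))),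
    fun t ht => ?_⟩
  have hbound := le_mul_exp_of_hasDerivAt_le_div_cube (hT T le_rfl).1 (by positivity)
    (fun s hs => hasDerivAt_avdEnergy z (by ring) (hT s hs).1 (hΦd _) (hx s) (hx' s)
      (hode s (hT s hs).2.1))
    (fun s hs => avdEnergyDeriv_le hΦ (hΦd _) hμ hz hp.le (hT s hs).1 (hT s hs).2.2) hE0 ht
  linarith [hlow t ht]

end HilbertSpace

/-- if `Φ` has a strong minimum `x*` (with modulus `μ > 0`), then
for any `α > 0` the trajectory of `(AVD)_α` converges strongly to `x*`, with
`Φ(x(t)) - min Φ = O(t^{-2α/3})`, `‖x(t) - x*‖² = O(t^{-2α/3})` and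
`‖ẋ(t)‖ = O(t^{-α/3})`. -/
theorem stmt_12
    {H : Type*} [NormedAddCommGroup H] [InnerProductSpace ℝ H] [CompleteSpace H]
    (Φ : H → ℝ) (hΦconv : ConvexOn ℝ Set.univ Φ) (hΦC1 : ContDiff ℝ 1 Φ)
    (xstar : H) (μ : ℝ) (hμ : 0 < μ)
    (hstrong : ∀ y : H, Φ xstar + μ / 2 * ‖y - xstar‖ ^ 2 ≤ Φ y)
    (α t₀ : ℝ) (hα : 0 < α) (ht₀ : 0 < t₀)
    (x : ℝ → H) (hx : ContDiff ℝ 2 x)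
    (hode : ∀ t : ℝ, t₀ ≤ t →
      deriv (deriv x) t + (α / t) • deriv x t + gradient Φ (x t) = 0) :
    Filter.Tendsto x Filter.atTop (nhds xstar) ∧
    (∃ M : ℝ, 0 ≤ M ∧ ∀ t : ℝ, t₀ ≤ t →
      Φ (x t) - Φ xstar ≤ M / t ^ (2 * α / 3)) ∧
    (∃ M : ℝ, 0 ≤ M ∧ ∀ t : ℝ, t₀ ≤ t →
      ‖x t - xstar‖ ^ 2 ≤ M / t ^ (2 * α / 3)) ∧
    (∃ M : ℝ, 0 ≤ M ∧ ∀ t : ℝ, t₀ ≤ t →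
      ‖deriv x t‖ ≤ M / t ^ (α / 3)) := by
  obtain ⟨hx1, -, hx2⟩ := (contDiff_succ_iff_deriv (n := 1)).mp hx
  have hΦd : Differentiable ℝ Φ := hΦC1.differentiable one_ne_zero
  obtain ⟨T, B, hB⟩ := exists_rpow_mul_le_of_avd hΦconv hΦd hμ hstrong hα ht₀ hx1
    (hx2.differentiable one_ne_zero) hode
  have hcont : ContinuousOn
      (fun t => t ^ (2 * α / 3) * (Φ (x t) - Φ xstar + ‖deriv x t‖ ^ 2)) (Ici t₀) :=
    (continuousOn_id.rpow_const fun t ht => Or.inl (ht₀.trans_le ht).ne').mul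
      (by fun_prop : Continuous _).continuousOn
  obtain ⟨M, hM0, hM⟩ := exists_nonneg_bound_of_continuousOn_Ici hcont hB
  have hpos t (ht : t₀ ≤ t) : 0 < t ^ (2 * α / 3) := Real.rpow_pos_of_pos (ht₀.trans_le ht) _
  have hgap t : μ / 2 * ‖x t - xstar‖ ^ 2 ≤ Φ (x t) - Φ xstar := by linarith [hstrong (x t)]
  have hvalue t (ht : t₀ ≤ t) : Φ (x t) - Φ xstar ≤ M / t ^ (2 * α / 3) := by
    rw [le_div_iff₀ (hpos t ht)]
    nlinarith [hM t ht, hpos t ht, sq_nonneg ‖deriv x t‖]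
  have hdist t (ht : t₀ ≤ t) : ‖x t - xstar‖ ^ 2 ≤ 2 / μ * M / t ^ (2 * α / 3) := by
    rw [mul_div_assoc, div_mul_eq_mul_div, le_div_iff₀ hμ]
    linarith [hgap t, hvalue t ht]
  refine ⟨tendsto_of_norm_sub_sq_le_div_rpow (by positivity) hdist, ⟨M, hM0, hvalue⟩,
    ⟨2 / μ * M, by positivity, hdist⟩, ⟨√M, Real.sqrt_nonneg M, fun t ht => ?_⟩⟩
  refine le_sqrt_div_rpow_of_rpow_mul_sq_le (ht₀.trans_le ht) (norm_nonneg _) ?_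
  rw [← mul_div_assoc]
  have hgap0 : 0 ≤ Φ (x t) - Φ xstar := le_trans (by positivity) (hgap t)
  nlinarith [hM t ht, mul_nonneg (hpos t ht).le hgap0]
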